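/- arXiv:2208.07901 — 2 statements merged into one kernel-verified Lean document; each statement's English description precedes it below -/
import Mathlib

section
/- Let ℓ > 0, C₁, C₂ ∈ ℝ \ {0}, β₁, β₂ > 0, and for h > 0 and z ∈ ℂ \ {0} set Ṽ_j(z) = C_j h^{β_j}/(2 i z) and R_j(z) = Ṽ_j(z)/(1 − Ṽ_j(z)) (defined when Ṽ_j(z) ≠ 1). Then there exists h₀ > 0 such that for every h ∈ (0, h₀) and every positive integer k with ℓ/3 ≤ π h k ≤ 3 ℓ, there exists exactly one z in the annulus {z ∈ ℂ : 1/4 ≤ |z| ≤ 4} satisfying z = π h k / ℓ + (i h/(2 ℓ)) Log( R₁(z) R₂(z) ), where Log denotes the principal branch of the complex logarithm (in particular Ṽ_j(z) ≠ 1 and R₁(z) R₂(z) ≠ 0 for all such z when h < h₀). -/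
open Filter Set Complex



lemma exists_fixedPoint_in (s : Set ℂ) (hsc : IsClosed s) (hne : s.Nonempty)
    (f : ℂ → ℂ) (hsf : Set.MapsTo f s s)
    (hl : ∀ x ∈ s, ∀ y ∈ s, dist (f x) (f y) ≤ (1/2 : ℝ) * dist x y) :
    ∃ z ∈ s, f z = z := by
  have hcw : ContractingWith (1/2 : NNReal) (hsf.restrict f s s) := by
    constructor
    · exact one_half_lt_one
    · apply LipschitzWith.of_dist_le_mul
      rintro ⟨x, hx⟩ ⟨y, hy⟩
      have := hl x hx y hy
      simpa [Subtype.dist_eq] using this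
  obtain ⟨x, hx⟩ := hne
  exact ⟨_, ContractingWith.efixedPoint_mem' hsc.isComplete hsf hcw hx (edist_ne_top _ _),
    ContractingWith.efixedPoint_isFixedPt' hsc.isComplete hsf hcw hx (edist_ne_top _ _)⟩

lemma eventually_to_h0 {P : ℝ → Prop} (h : ∀ᶠ h in nhdsWithin (0:ℝ) (Set.Ioi 0), P h) :
    ∃ h₀ > (0:ℝ), ∀ h, 0 < h → h < h₀ → P h := by
  rw [Filter.eventually_iff, mem_nhdsGT_iff_exists_Ioo_subset] at h
  obtain ⟨u, hu, hsub⟩ := h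
  exact ⟨u, hu, fun h h0 hu' => hsub ⟨h0, hu'⟩⟩

lemma log25_le : Real.log 25 ≤ 4 := by
  rw [Real.log_le_iff_le_exp (by norm_num)]
  have h4 : Real.exp 4 = Real.exp 1 ^ (4:ℕ) := by
    rw [← Real.exp_nat_mul]; norm_num
  have h27 : (2.7:ℝ) ≤ Real.exp 1 := by
    have := Real.exp_one_gt_d9; nlinarith
  have : (2.7:ℝ)^(4:ℕ) ≤ Real.exp 1 ^ (4:ℕ) := by
    exact pow_le_pow_left₀ (by norm_num) h27 4
  rw [h4]; nlinarith [this]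

lemma log64_le : Real.log 64 ≤ 5 := by
  rw [Real.log_le_iff_le_exp (by norm_num)]
  have h4 : Real.exp 5 = Real.exp 1 ^ (5:ℕ) := by
    rw [← Real.exp_nat_mul]; norm_num
  have h27 : (2.7:ℝ) ≤ Real.exp 1 := by
    have := Real.exp_one_gt_d9; nlinarith
  have : (2.7:ℝ)^(5:ℕ) ≤ Real.exp 1 ^ (5:ℕ) := by
    exact pow_le_pow_left₀ (by norm_num) h27 5
  rw [h4]; nlinarith [this]

set_option maxHeartbeats 1000000 in
lemma core (a η Λ P : ℝ) (γ₁ γ₂ : ℂ)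
    (hη : 0 < η) (hη' : η ≤ 1/100)
    (ha1 : 1/3 ≤ a) (ha2 : a ≤ 3)
    (hγ₁ : ‖γ₁‖ ≤ 1/8) (hγ₂ : ‖γ₂‖ ≤ 1/8)
    (hP : P = ‖(γ₁ * γ₂)‖) (hP0 : 0 < P)
    (hΛ : Λ = Real.log P) (hΛ1 : Λ ≤ -1)
    (hJ : η * (4 - Λ) ≤ 1/100)
    (hcut : ∀ z : ℂ, 1/4 ≤ z.re → z.re ≤ 3.2 → η * (Λ - 4) ≤ z.im → z.im ≤ η * (Λ + 5) →
      γ₁ * γ₂ / ((z - γ₁) * (z - γ₂)) ∈ Complex.slitPlane) :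
    ∃! z : ℂ, 1/4 ≤ ‖z‖ ∧ ‖z‖ ≤ 4 ∧
      z = (a : ℂ) + Complex.I * (η : ℂ) * Complex.log (γ₁ * γ₂ / ((z - γ₁) * (z - γ₂))) := by
  set q : ℂ → ℂ := fun z => (z - γ₁) * (z - γ₂) with hq_def
  set g : ℂ → ℂ := fun z => γ₁ * γ₂ / q z with hg_def
  set Φ : ℂ → ℂ := fun z => (a:ℂ) + Complex.I * (η:ℂ) * Complex.log (g z) with hΦ_def
  set S : Set ℂ := {z : ℂ | |z.re - a| ≤ 4*η ∧ η*(Λ-4) ≤ z.im ∧ z.im ≤ η*(Λ+5)} with hS_def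
  have hπ4 : Real.pi ≤ 4 := Real.pi_le_four
  -- re bounds on S
  have hre : ∀ z ∈ S, 1/4 ≤ z.re ∧ z.re ≤ 3.2 := by
    rintro z ⟨h1, _, _⟩
    rw [abs_le] at h1
    constructor <;> nlinarith
  -- im bounds on S
  have him : ∀ z ∈ S, |z.im| ≤ 1/100 := by
    rintro z ⟨_, h2, h3⟩
    rw [abs_le]
    constructor <;> nlinarith
  -- distance bounds from S membership
  have hd1 : ∀ z ∈ S, ∀ γ : ℂ, ‖γ‖ ≤ 1/8 →
      1/8 ≤ ‖z - γ‖ ∧ ‖z - γ‖ ≤ 5 := by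
    intro z hz γ hγ
    obtain ⟨hr1, hr2⟩ := hre z hz
    have hi := him z hz
    constructor
    · have h1 : |(z - γ).re| ≤ ‖z - γ‖ := Complex.abs_re_le_norm _
      have h2 : |γ.re| ≤ ‖γ‖ := Complex.abs_re_le_norm _
      have : (z - γ).re = z.re - γ.re := by simp
      rw [this] at h1
      rw [abs_le] at h2
      calc (1/8 : ℝ) ≤ z.re - γ.re := by nlinarith
        _ ≤ |z.re - γ.re| := le_abs_self _
        _ ≤ _ := h1
    · calc ‖z - γ‖ ≤ ‖z‖ + ‖γ‖ := by
            simpa using norm_sub_le z γ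
        _ ≤ (|z.re| + |z.im|) + 1/8 := by
            have := Complex.norm_le_abs_re_add_abs_im z
            nlinarith
        _ ≤ 5 := by
            have : |z.re| ≤ 3.2 := by rw [abs_le]; constructor <;> nlinarith
            nlinarith
  -- distance bounds from annulus membership
  have hd2 : ∀ z : ℂ, 1/4 ≤ ‖z‖ → ‖z‖ ≤ 4 → ∀ γ : ℂ, ‖γ‖ ≤ 1/8 →
      1/8 ≤ ‖z - γ‖ ∧ ‖z - γ‖ ≤ 5 := by
    intro z h1 h2 γ hγ
    have hlow : ‖z‖ - ‖γ‖ ≤ ‖z - γ‖ := by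
      simpa using norm_sub_norm_le z γ
    have hhigh : ‖z - γ‖ ≤ ‖z‖ + ‖γ‖ := by
      simpa using norm_sub_le z γ
    constructor <;> nlinarith
  -- |g| bounds
  have hgabs : ∀ z : ℂ, 1/8 ≤ ‖(z - γ₁)‖ → ‖(z - γ₁)‖ ≤ 5 →
      1/8 ≤ ‖(z - γ₂)‖ → ‖(z - γ₂)‖ ≤ 5 →
      P/25 ≤ ‖(g z)‖ ∧ ‖(g z)‖ ≤ 64*P := by
    intro z h1 h2 h3 h4
    have hq : ‖(q z)‖ = ‖(z - γ₁)‖ * ‖(z - γ₂)‖ := by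
      simp [hq_def]
    have hg : ‖(g z)‖ = P / (‖(z - γ₁)‖ * ‖(z - γ₂)‖) := by
      simp only [hg_def]
      rw [norm_div, hq, hP]
    rw [hg]
    have e1 : (0:ℝ) < ‖(z - γ₁)‖ := lt_of_lt_of_le (by norm_num) h1
    have e2 : (0:ℝ) < ‖(z - γ₂)‖ := lt_of_lt_of_le (by norm_num) h3
    have hd0 : (0:ℝ) < ‖(z - γ₁)‖ * ‖(z - γ₂)‖ := mul_pos e1 e2
    have hub : ‖(z - γ₁)‖ * ‖(z - γ₂)‖ ≤ 25 := by
      calc ‖(z - γ₁)‖ * ‖(z - γ₂)‖ ≤ 5 * 5 :=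
            mul_le_mul h2 h4 e2.le (by norm_num)
        _ = 25 := by norm_num
    have hlb : (1/64 : ℝ) ≤ ‖(z - γ₁)‖ * ‖(z - γ₂)‖ := by
      calc (1/64:ℝ) = (1/8) * (1/8) := by norm_num
        _ ≤ ‖(z - γ₁)‖ * ‖(z - γ₂)‖ :=
            mul_le_mul h1 h3 (by norm_num) e1.le
    constructor
    · exact (div_le_div_iff_of_pos_left hP0 (by norm_num) hd0).mpr hub
    · rw [div_le_iff₀ hd0]
      have h64 : (64:ℝ)*P*(1/64) ≤ 64*P*(‖(z - γ₁)‖ * ‖(z - γ₂)‖) :=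
        mul_le_mul_of_nonneg_left hlb (by positivity)
      linarith
  -- log |g| bounds
  have hlogg : ∀ z : ℂ, 1/8 ≤ ‖(z - γ₁)‖ → ‖(z - γ₁)‖ ≤ 5 →
      1/8 ≤ ‖(z - γ₂)‖ → ‖(z - γ₂)‖ ≤ 5 →
      η*(Λ-4) ≤ η * Real.log (‖(g z)‖) ∧ η * Real.log (‖(g z)‖) ≤ η*(Λ+5) := by
    intro z h1 h2 h3 h4
    obtain ⟨hg1, hg2⟩ := hgabs z h1 h2 h3 h4
    have hg0 : (0:ℝ) < ‖(g z)‖ := lt_of_lt_of_le (by positivity) hg1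
    have hl1 : Real.log (P/25) ≤ Real.log (‖(g z)‖) := Real.log_le_log (by positivity) hg1
    have hl2 : Real.log (‖(g z)‖) ≤ Real.log (64*P) := Real.log_le_log hg0 hg2
    rw [Real.log_div hP0.ne' (by norm_num)] at hl1
    rw [Real.log_mul (by norm_num) hP0.ne'] at hl2
    have h25 := log25_le
    have h64 := log64_le
    rw [← hΛ] at hl1 hl2
    constructor
    · apply mul_le_mul_of_nonneg_left _ hη.le
      linarith
    · apply mul_le_mul_of_nonneg_left _ hη.le
      linarith
  -- slit plane
  have hslit : ∀ z ∈ S, g z ∈ Complex.slitPlane := by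
    intro z hz
    obtain ⟨hr1, hr2⟩ := hre z hz
    exact hcut z hr1 hr2 hz.2.1 hz.2.2
  have hgne : ∀ z ∈ S, g z ≠ 0 := by
    intro z hz
    obtain ⟨hd1a, hd1b⟩ := hd1 z hz γ₁ hγ₁
    obtain ⟨hd2a, hd2b⟩ := hd1 z hz γ₂ hγ₂
    have := (hgabs z hd1a hd1b hd2a hd2b).1
    intro h
    rw [h] at this
    simp at this
    nlinarith
  -- re/im of Φ
  have hΦre : ∀ z : ℂ, (Φ z).re = a - η * (Complex.log (g z)).im := by
    intro z
    simp only [hΦ_def, Complex.add_re, Complex.mul_re, Complex.mul_im, Complex.I_re,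
      Complex.I_im, Complex.ofReal_re, Complex.ofReal_im]
    ring
  have hΦim : ∀ z : ℂ, (Φ z).im = η * (Complex.log (g z)).re := by
    intro z
    simp only [hΦ_def, Complex.add_im, Complex.mul_re, Complex.mul_im, Complex.I_re,
      Complex.I_im, Complex.ofReal_re, Complex.ofReal_im]
    ring
  -- maps to
  have hmaps : Set.MapsTo Φ S S := by
    intro z hz
    obtain ⟨hd1a, hd1b⟩ := hd1 z hz γ₁ hγ₁
    obtain ⟨hd2a, hd2b⟩ := hd1 z hz γ₂ hγ₂
    obtain ⟨hl1, hl2⟩ := hlogg z hd1a hd1b hd2a hd2b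
    have harg : |(Complex.log (g z)).im| ≤ Real.pi := by
      rw [Complex.log_im]; exact Complex.abs_arg_le_pi _
    rw [abs_le] at harg
    refine ⟨?_, ?_, ?_⟩
    · rw [hΦre, abs_le]
      constructor
      · have := mul_le_mul_of_nonneg_left harg.2 hη.le
        nlinarith
      · have := mul_le_mul_of_nonneg_left harg.1 hη.le
        nlinarith
    · rw [hΦim, Complex.log_re]
      exact hl1
    · rw [hΦim, Complex.log_re]
      exact hl2
  -- S is closed, convex, nonempty
  have hSeq : S = Complex.re ⁻¹' (Icc (a-4*η) (a+4*η)) ∩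
      Complex.im ⁻¹' (Icc (η*(Λ-4)) (η*(Λ+5))) := by
    ext z
    simp only [hS_def, Set.mem_setOf_eq, Set.mem_inter_iff, Set.mem_preimage, Set.mem_Icc, abs_le]
    constructor
    · rintro ⟨⟨u, v⟩, w, x⟩
      exact ⟨⟨by linarith, by linarith⟩, w, x⟩
    · rintro ⟨⟨u, v⟩, w, x⟩
      exact ⟨⟨by linarith, by linarith⟩, w, x⟩
  have hconv : Convex ℝ S := by
    rw [hSeq]
    exact ((convex_Icc _ _).linear_preimage Complex.reLm).inter
      ((convex_Icc _ _).linear_preimage Complex.imLm)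
  have hclosed : IsClosed S := by
    rw [hSeq]
    exact (isClosed_Icc.preimage Complex.continuous_re).inter
      (isClosed_Icc.preimage Complex.continuous_im)
  have hSne : S.Nonempty := by
    refine ⟨⟨a, η*(Λ-4)⟩, ?_, ?_, ?_⟩
    · show |a - a| ≤ 4*η
      simp
      positivity
    · exact le_refl _
    · show η*(Λ-4) ≤ η*(Λ+5)
      nlinarith
  -- derivative of Φ
  have hderiv : ∀ z ∈ S, HasDerivAt Φ (Complex.I * (η:ℂ) * (-((z-γ₁)⁻¹ + (z-γ₂)⁻¹))) z := by
    intro z hz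
    obtain ⟨hd1a, hd1b⟩ := hd1 z hz γ₁ hγ₁
    obtain ⟨hd2a, hd2b⟩ := hd1 z hz γ₂ hγ₂
    have hz1 : z - γ₁ ≠ 0 := by
      intro h; rw [h] at hd1a; simp at hd1a; linarith
    have hz2 : z - γ₂ ≠ 0 := by
      intro h; rw [h] at hd2a; simp at hd2a; linarith
    have hqne : q z ≠ 0 := mul_ne_zero hz1 hz2
    have hgz : g z ≠ 0 := hgne z hz
    have hcne : γ₁ * γ₂ ≠ 0 := by
      intro h
      rw [hP, h] at hP0
      simp at hP0
    have hq' : HasDerivAt q ((z - γ₂) + (z - γ₁)) z := by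
      have h1 : HasDerivAt (fun w : ℂ => w - γ₁) 1 z := (hasDerivAt_id z).sub_const γ₁
      have h2 : HasDerivAt (fun w : ℂ => w - γ₂) 1 z := (hasDerivAt_id z).sub_const γ₂
      have := h1.mul h2
      simp only [one_mul, mul_one] at this
      exact this
    have hg' : HasDerivAt g ((0 * q z - γ₁*γ₂ * ((z - γ₂) + (z - γ₁))) / q z ^ 2) z :=
      (hasDerivAt_const z (γ₁*γ₂)).div hq' hqne
    have hlog' : HasDerivAt (fun w => Complex.log (g w))
        ((g z)⁻¹ * ((0 * q z - γ₁*γ₂ * ((z - γ₂) + (z - γ₁))) / q z ^ 2)) z :=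
      (Complex.hasDerivAt_log (hslit z hz)).comp z hg'
    have hΦ' : HasDerivAt Φ
        (Complex.I * (η:ℂ) * ((g z)⁻¹ * ((0 * q z - γ₁*γ₂ * ((z - γ₂) + (z - γ₁))) / q z ^ 2))) z :=
      (hlog'.const_mul (Complex.I * (η:ℂ))).const_add (a:ℂ)
    convert hΦ' using 2
    have hgzq : g z = γ₁ * γ₂ / q z := rfl
    rw [hgzq]
    simp only [hq_def]
    have hγ₁ne : γ₁ ≠ 0 := left_ne_zero_of_mul hcne
    have hγ₂ne : γ₂ ≠ 0 := right_ne_zero_of_mul hcne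
    field_simp
    ring
  -- Lipschitz bound via mean value inequality
  have hlip : ∀ x ∈ S, ∀ y ∈ S, dist (Φ x) (Φ y) ≤ (1/2:ℝ) * dist x y := by
    have hboundd : ∀ w ∈ S, ‖Complex.I * (η:ℂ) * (-((w-γ₁)⁻¹ + (w-γ₂)⁻¹))‖ ≤ 16*η := by
      intro w hw
      obtain ⟨hd1a, _⟩ := hd1 w hw γ₁ hγ₁
      obtain ⟨hd2a, _⟩ := hd1 w hw γ₂ hγ₂
      have h1 : ‖(w-γ₁)⁻¹‖ ≤ 8 := by
        rw [norm_inv]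
        rw [inv_le_comm₀ (by linarith) (by norm_num)]
        linarith
      have h2 : ‖(w-γ₂)⁻¹‖ ≤ 8 := by
        rw [norm_inv]
        rw [inv_le_comm₀ (by linarith) (by norm_num)]
        linarith
      calc ‖Complex.I * (η:ℂ) * (-((w-γ₁)⁻¹ + (w-γ₂)⁻¹))‖
          = ‖Complex.I‖ * ‖(η:ℂ)‖ * ‖(w-γ₁)⁻¹ + (w-γ₂)⁻¹‖ := by
            rw [norm_mul, norm_mul, norm_neg]
        _ ≤ 1 * η * (8 + 8) := by
            have hI : ‖Complex.I‖ = 1 := by simp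
            have hη2 : ‖(η:ℂ)‖ = η := by
              rw [Complex.norm_real, Real.norm_eq_abs, abs_of_pos hη]
            rw [hI, hη2]
            have := norm_add_le ((w-γ₁)⁻¹) ((w-γ₂)⁻¹)
            have h16 : ‖(w-γ₁)⁻¹ + (w-γ₂)⁻¹‖ ≤ 16 := by linarith
            nlinarith [norm_nonneg ((w-γ₁)⁻¹ + (w-γ₂)⁻¹)]
        _ = 16*η := by ring
    have key : ∀ x ∈ S, ∀ y ∈ S, ‖Φ y - Φ x‖ ≤ (16*η) * ‖y - x‖ := by
      intro x hx y hy
      refine hconv.norm_image_sub_le_of_norm_hasFDerivWithin_le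
        (f' := fun w => (ContinuousLinearMap.smulRight (1 : ℂ →L[ℂ] ℂ)
          (Complex.I * (η:ℂ) * (-((w-γ₁)⁻¹ + (w-γ₂)⁻¹)))).restrictScalars ℝ)
        (fun w hw => (((hderiv w hw).hasFDerivAt).restrictScalars ℝ).hasFDerivWithinAt)
        ?_ hx hy
      intro w hw
      rw [ContinuousLinearMap.norm_restrictScalars, ContinuousLinearMap.norm_smulRight_apply,
        ContinuousLinearMap.one_def, ContinuousLinearMap.norm_id]
      rw [one_mul]
      exact hboundd w hw
    intro x hx y hy
    rw [dist_eq_norm, dist_eq_norm]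
    calc ‖Φ x - Φ y‖ ≤ (16*η) * ‖x - y‖ := key y hy x hx
      _ ≤ (1/2:ℝ) * ‖x - y‖ := by
          apply mul_le_mul_of_nonneg_right _ (norm_nonneg _)
          linarith
  -- existence of fixed point
  obtain ⟨z₀, hz₀S, hz₀fix⟩ := exists_fixedPoint_in S hclosed hSne Φ hmaps hlip
  have hannulus : ∀ z ∈ S, 1/4 ≤ ‖z‖ ∧ ‖z‖ ≤ 4 := by
    intro z hz
    obtain ⟨hr1, hr2⟩ := hre z hz
    have hi := him z hz
    constructor
    · calc (1/4:ℝ) ≤ z.re := hr1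
        _ ≤ |z.re| := le_abs_self _
        _ ≤ ‖z‖ := Complex.abs_re_le_norm z
    · calc ‖z‖ ≤ |z.re| + |z.im| := Complex.norm_le_abs_re_add_abs_im z
        _ ≤ 3.2 + 1/100 := by
            have h32 : |z.re| ≤ 3.2 := by rw [abs_le]; constructor <;> linarith
            linarith
        _ ≤ 4 := by norm_num
  -- any annulus solution is in S
  have huniqS : ∀ y : ℂ, 1/4 ≤ ‖y‖ → ‖y‖ ≤ 4 → y = Φ y → y ∈ S := by
    intro y h1 h2 heq
    obtain ⟨e1a, e1b⟩ := hd2 y h1 h2 γ₁ hγ₁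
    obtain ⟨e2a, e2b⟩ := hd2 y h1 h2 γ₂ hγ₂
    obtain ⟨hl1, hl2⟩ := hlogg y e1a e1b e2a e2b
    have hyre : y.re = a - η * (Complex.log (g y)).im := by
      rw [congrArg Complex.re heq, hΦre]
    have hyim : y.im = η * (Complex.log (g y)).re := by
      rw [congrArg Complex.im heq, hΦim]
    have harg : |(Complex.log (g y)).im| ≤ Real.pi := by
      rw [Complex.log_im]; exact Complex.abs_arg_le_pi _
    rw [abs_le] at harg
    refine ⟨?_, ?_, ?_⟩
    · rw [hyre, abs_le]
      constructor
      · have := mul_le_mul_of_nonneg_left harg.2 hη.le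
        nlinarith
      · have := mul_le_mul_of_nonneg_left harg.1 hη.le
        nlinarith
    · rw [hyim, Complex.log_re]
      exact hl1
    · rw [hyim, Complex.log_re]
      exact hl2
  -- assemble
  refine ⟨z₀, ⟨(hannulus z₀ hz₀S).1, (hannulus z₀ hz₀S).2, hz₀fix.symm⟩, ?_⟩
  rintro y ⟨h1, h2, heq⟩
  have hyS := huniqS y h1 h2 heq
  have hco := hlip y hyS z₀ hz₀S
  have heq' : Φ y = y := heq.symm
  rw [heq', hz₀fix] at hco
  have : dist y z₀ = 0 := by linarith [dist_nonneg (x := y) (y := z₀)]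
  exact dist_eq_zero.mp this



lemma good_eventually (ℓ C₁ C₂ β₁ β₂ : ℝ) (hℓ : 0 < ℓ) (hC₁ : C₁ ≠ 0) (hC₂ : C₂ ≠ 0)
    (hβ₁ : 0 < β₁) (hβ₂ : 0 < β₂) :
    ∀ᶠ h in nhdsWithin (0:ℝ) (Set.Ioi 0),
      (0 < h ∧ h < 1) ∧
      (|C₁| * h^β₁ ≤ 1/4 ∧ |C₂| * h^β₂ ≤ 1/4) ∧
      h/(2*ℓ) ≤ 1/100 ∧
      Real.log (|C₁*C₂|/4 * h^(β₁+β₂)) ≤ -1 ∧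
      h/(2*ℓ) * (4 - Real.log (|C₁*C₂|/4 * h^(β₁+β₂))) ≤ 1/100 ∧
      (0 < C₁*C₂ →
        h/(2*ℓ) * (Real.log (|C₁*C₂|/4 * h^(β₁+β₂)) + 5) < -((C₁*h^β₁ + C₂*h^β₂)/4) ∨
        -((C₁*h^β₁ + C₂*h^β₂)/4) < h/(2*ℓ) * (Real.log (|C₁*C₂|/4 * h^(β₁+β₂)) - 4)) := by
  have hb : 0 < β₁ + β₂ := by linarith
  set K := Real.log (|C₁*C₂|/4) with hK
  have hCC0 : (0:ℝ) < |C₁*C₂|/4 := by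
    have : C₁*C₂ ≠ 0 := mul_ne_zero hC₁ hC₂
    have := abs_pos.mpr this
    linarith
  have ev_pos : ∀ᶠ h in nhdsWithin (0:ℝ) (Set.Ioi 0), 0 < h := eventually_mem_nhdsWithin
  have evΛ : ∀ᶠ h in nhdsWithin (0:ℝ) (Set.Ioi 0),
      Real.log (|C₁*C₂|/4 * h^(β₁+β₂)) = K + (β₁+β₂) * Real.log h := by
    filter_upwards [ev_pos] with h h0
    rw [Real.log_mul hCC0.ne' (Real.rpow_pos_of_pos h0 _).ne', Real.log_rpow h0]
  have tid : Tendsto (fun h:ℝ => h) (nhdsWithin (0:ℝ) (Set.Ioi 0)) (nhds 0) :=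
    tendsto_id.mono_right nhdsWithin_le_nhds
  have trpow : ∀ β : ℝ, 0 < β →
      Tendsto (fun h:ℝ => h^β) (nhdsWithin (0:ℝ) (Set.Ioi 0)) (nhds 0) := by
    intro β hβ
    have c := (Real.continuousAt_rpow_const 0 β (Or.inr hβ.le)).tendsto
    rw [Real.zero_rpow hβ.ne'] at c
    exact c.mono_left nhdsWithin_le_nhds
  have tΛ : Tendsto (fun h:ℝ => K + (β₁+β₂) * Real.log h)
      (nhdsWithin (0:ℝ) (Set.Ioi 0)) atBot :=
    tendsto_atBot_add_const_left _ K (Real.tendsto_log_nhdsGT_zero.const_mul_atBot hb)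
  have evΛle : ∀ c : ℝ, ∀ᶠ h in nhdsWithin (0:ℝ) (Set.Ioi 0),
      Real.log (|C₁*C₂|/4 * h^(β₁+β₂)) ≤ c := by
    intro c
    filter_upwards [evΛ, tΛ.eventually_le_atBot c] with h he hle
    rw [he]; exact hle
  -- rpow smallness
  have evr : ∀ C β : ℝ, 0 < β → ∀ᶠ h in nhdsWithin (0:ℝ) (Set.Ioi 0), |C| * h^β ≤ 1/4 := by
    intro C β hβ
    have t : Tendsto (fun h:ℝ => |C| * h^β) (nhdsWithin (0:ℝ) (Set.Ioi 0)) (nhds 0) := by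
      simpa using (trpow β hβ).const_mul |C|
    exact t.eventually_le_const (by norm_num)
  -- G4
  have tG4 : Tendsto (fun h:ℝ => h/(2*ℓ) * (4 - (K + (β₁+β₂) * Real.log h)))
      (nhdsWithin (0:ℝ) (Set.Ioi 0)) (nhds 0) := by
    have heq : (fun h:ℝ => h/(2*ℓ) * (4 - (K + (β₁+β₂) * Real.log h))) =
        fun h => (4-K)/(2*ℓ) * h - ((β₁+β₂)/(2*ℓ)) * (Real.log h * h^(1:ℝ)) := by
      funext h
      rw [Real.rpow_one]
      field_simp
      ring
    rw [heq]
    have t1 : Tendsto (fun h:ℝ => (4-K)/(2*ℓ) * h) (nhdsWithin (0:ℝ) (Set.Ioi 0)) (nhds 0) := by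
      simpa using tid.const_mul ((4-K)/(2*ℓ))
    have t2 : Tendsto (fun h:ℝ => ((β₁+β₂)/(2*ℓ)) * (Real.log h * h^(1:ℝ)))
        (nhdsWithin (0:ℝ) (Set.Ioi 0)) (nhds 0) := by
      simpa using (tendsto_log_mul_rpow_nhdsGT_zero one_pos).const_mul ((β₁+β₂)/(2*ℓ))
    simpa using t1.sub t2
  have evG4 : ∀ᶠ h in nhdsWithin (0:ℝ) (Set.Ioi 0),
      h/(2*ℓ) * (4 - Real.log (|C₁*C₂|/4 * h^(β₁+β₂))) ≤ 1/100 := by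
    filter_upwards [evΛ, tG4.eventually_le_const (by norm_num : (0:ℝ) < 1/100)] with h he hle
    rw [he]; exact hle
  -- dichotomy
  have evD : ∀ᶠ h in nhdsWithin (0:ℝ) (Set.Ioi 0), (0 < C₁*C₂ →
      h/(2*ℓ) * (Real.log (|C₁*C₂|/4 * h^(β₁+β₂)) + 5) < -((C₁*h^β₁ + C₂*h^β₂)/4) ∨
      -((C₁*h^β₁ + C₂*h^β₂)/4) < h/(2*ℓ) * (Real.log (|C₁*C₂|/4 * h^(β₁+β₂)) - 4)) := by
    by_cases hCC : 0 < C₁*C₂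
    swap
    · exact Filter.Eventually.of_forall (fun h hc => absurd hc hCC)
    rcases lt_or_gt_of_ne hC₁ with hC₁neg | hC₁pos
    · -- both negative
      have hC₂neg : C₂ < 0 := by
        rcases lt_or_gt_of_ne hC₂ with h' | h'
        · exact h'
        · nlinarith
      filter_upwards [ev_pos, evΛle (-5)] with h h0 hΛ5 _
      left
      have hβp1 : (0:ℝ) < h^β₁ := Real.rpow_pos_of_pos h0 _
      have hβp2 : (0:ℝ) < h^β₂ := Real.rpow_pos_of_pos h0 _
      have hT : C₁*h^β₁ + C₂*h^β₂ < 0 := by nlinarith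
      have hη : 0 < h/(2*ℓ) := by positivity
      nlinarith
    · -- both positive
      have hC₂pos : 0 < C₂ := by nlinarith
      by_cases hββ : 1 ≤ β₁ ∧ 1 ≤ β₂
      · -- large exponents : use Λ very negative
        filter_upwards [ev_pos, (eventually_lt_nhds one_pos).filter_mono nhdsWithin_le_nhds,
          evΛle (-5 - ℓ*(C₁+C₂)/2 - 1)] with h h0 h1 hΛ _
        left
        have hη : 0 < h/(2*ℓ) := by positivity
        have hb1 : h^β₁ ≤ h := by
          have := Real.rpow_le_rpow_of_exponent_ge h0 h1.le hββ.1
          rwa [Real.rpow_one] at this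
        have hb2 : h^β₂ ≤ h := by
          have := Real.rpow_le_rpow_of_exponent_ge h0 h1.le hββ.2
          rwa [Real.rpow_one] at this
        have hβp1 : (0:ℝ) < h^β₁ := Real.rpow_pos_of_pos h0 _
        have hβp2 : (0:ℝ) < h^β₂ := Real.rpow_pos_of_pos h0 _
        -- T ≤ (C₁+C₂)h/4 = (h/(2ℓ)) * (ℓ(C₁+C₂)/2)
        have hT : (C₁*h^β₁ + C₂*h^β₂)/4 ≤ h/(2*ℓ) * (ℓ*(C₁+C₂)/2) := by
          have : h/(2*ℓ) * (ℓ*(C₁+C₂)/2) = (C₁+C₂)*h/4 := by field_simp; ring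
          rw [this]
          nlinarith
        have hkey : h/(2*ℓ) * (Real.log (|C₁*C₂|/4 * h^(β₁+β₂)) + 5) <
            h/(2*ℓ) * (-(ℓ*(C₁+C₂)/2)) := by
          apply mul_lt_mul_of_pos_left _ hη
          linarith
        have : h/(2*ℓ) * (-(ℓ*(C₁+C₂)/2)) = -(h/(2*ℓ) * (ℓ*(C₁+C₂)/2)) := by ring
        rw [this] at hkey
        linarith
      · -- some exponent < 1
        have hsmall : (β₁ < 1 ∧ 0 < C₁) ∨ (β₂ < 1 ∧ 0 < C₂) := by
          rcases not_and_or.mp hββ with h' | h'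
          · exact Or.inl ⟨lt_of_not_ge h', hC₁pos⟩
          · exact Or.inr ⟨lt_of_not_ge h', hC₂pos⟩
        -- helper : for the small exponent, η(4-Λ) < C h^β /4 eventually
        have helper : ∀ C β : ℝ, 0 < C → 0 < β → β < 1 →
            ∀ᶠ h in nhdsWithin (0:ℝ) (Set.Ioi 0),
              h/(2*ℓ) * (4 - Real.log (|C₁*C₂|/4 * h^(β₁+β₂))) < C * h^β / 4 := by
          intro C β hC hβ hβ1
          have hr : 0 < 1 - β := by linarith
          have t : Tendsto (fun h:ℝ => (4-K)/(2*ℓ) * h^(1-β) -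
              ((β₁+β₂)/(2*ℓ)) * (Real.log h * h^(1-β)))
              (nhdsWithin (0:ℝ) (Set.Ioi 0)) (nhds 0) := by
            have t1 := (trpow (1-β) hr).const_mul ((4-K)/(2*ℓ))
            have t2 := (tendsto_log_mul_rpow_nhdsGT_zero hr).const_mul ((β₁+β₂)/(2*ℓ))
            simpa using t1.sub t2
          filter_upwards [ev_pos, evΛ, t.eventually_lt_const (by positivity : (0:ℝ) < C/4)]
            with h h0 he hlt
          rw [he]
          have hβp : (0:ℝ) < h^β := Real.rpow_pos_of_pos h0 _
          have hmul := mul_lt_mul_of_pos_left hlt hβp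
          have hrw : h^β * ((4-K)/(2*ℓ) * h^(1-β) - ((β₁+β₂)/(2*ℓ)) * (Real.log h * h^(1-β)))
              = h/(2*ℓ) * (4 - (K + (β₁+β₂) * Real.log h)) := by
            have hhh : h^β * h^(1-β) = h := by
              rw [← Real.rpow_add h0]
              norm_num
            linear_combination (4 - K - (β₁+β₂) * Real.log h)/(2*ℓ) * hhh
          rw [hrw] at hmul
          calc h/(2*ℓ) * (4 - (K + (β₁+β₂) * Real.log h)) < h^β * (C/4) := hmul
            _ = C * h^β / 4 := by ring
        rcases hsmall with ⟨hβ1', hC'⟩ | ⟨hβ2', hC'⟩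
        · filter_upwards [ev_pos, helper C₁ β₁ hC' hβ₁ hβ1'] with h h0 hlt _
          right
          have hβp2 : (0:ℝ) < h^β₂ := Real.rpow_pos_of_pos h0 _
          have : C₂ * h^β₂ > 0 := by positivity
          nlinarith
        · filter_upwards [ev_pos, helper C₂ β₂ hC' hβ₂ hβ2'] with h h0 hlt _
          right
          have hβp1 : (0:ℝ) < h^β₁ := Real.rpow_pos_of_pos h0 _
          have : C₁ * h^β₁ > 0 := by positivity
          nlinarith
  -- assemble
  filter_upwards [ev_pos, (eventually_lt_nhds one_pos).filter_mono nhdsWithin_le_nhds,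
    evr C₁ β₁ hβ₁, evr C₂ β₂ hβ₂,
    (tendsto_id.mono_right nhdsWithin_le_nhds : Tendsto (fun h:ℝ => h)
      (nhdsWithin (0:ℝ) (Set.Ioi 0)) (nhds 0)).eventually_le_const
      (by positivity : (0:ℝ) < 2*ℓ/100) |>.mono (fun h hh => hh),
    evΛle (-1), evG4, evD] with h h0 h1 h2 h3 h4 h5 h6 h7
  simp only [id_eq] at h4
  refine ⟨⟨h0, h1⟩, ⟨h2, h3⟩, ?_, h5, h6, h7⟩
  rw [div_le_div_iff₀ (by positivity) (by norm_num)]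
  linarith


/-- `Ṽ_j(z) = C_j h^{β_j} / (2 i z)`. -/
noncomputable def Vt (Cj βj h : ℝ) (z : ℂ) : ℂ :=
  ((Cj * h ^ βj : ℝ) : ℂ) / (2 * Complex.I * z)

/-- `R_j(z) = Ṽ_j(z) / (1 - Ṽ_j(z))`. -/
noncomputable def Rc (Cj βj h : ℝ) (z : ℂ) : ℂ := Vt Cj βj h z / (1 - Vt Cj βj h z)

set_option maxHeartbeats 1000000 in
/-- The Rouché-theorem step for two deltas: for `h` small, for each positive integer `k`
with `ℓ/3 ≤ πhk ≤ 3ℓ`, the fixed point equation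
`z = πhk/ℓ + (ih/(2ℓ)) Log(R₁(z)R₂(z))` has exactly one solution in the annulus
`1/4 ≤ |z| ≤ 4`; moreover for such `h` all `z` in the annulus satisfy `Ṽ_j(z) ≠ 1`
and `R₁(z)R₂(z) ≠ 0`. -/
theorem two_delta_rouche
    (ℓ C₁ C₂ β₁ β₂ : ℝ) (hℓ : 0 < ℓ) (hC₁ : C₁ ≠ 0) (hC₂ : C₂ ≠ 0)
    (hβ₁ : 0 < β₁) (hβ₂ : 0 < β₂) :
    ∃ h₀ > (0 : ℝ), ∀ h : ℝ, 0 < h → h < h₀ →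
      (∀ z : ℂ, 1 / 4 ≤ ‖z‖ → ‖z‖ ≤ 4 →
        Vt C₁ β₁ h z ≠ 1 ∧ Vt C₂ β₂ h z ≠ 1 ∧ Rc C₁ β₁ h z * Rc C₂ β₂ h z ≠ 0) ∧
      ∀ k : ℕ, 0 < k → ℓ / 3 ≤ Real.pi * h * k → Real.pi * h * k ≤ 3 * ℓ →
        ∃! z : ℂ, 1 / 4 ≤ ‖z‖ ∧ ‖z‖ ≤ 4 ∧
          z = ((Real.pi * h * k / ℓ : ℝ) : ℂ)
            + Complex.I * (h : ℂ) / (2 * (ℓ : ℂ)) *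
              Complex.log (Rc C₁ β₁ h z * Rc C₂ β₂ h z) := by
  obtain ⟨h₀, hh₀, hgood⟩ := eventually_to_h0 (good_eventually ℓ C₁ C₂ β₁ β₂ hℓ hC₁ hC₂ hβ₁ hβ₂)
  refine ⟨h₀, hh₀, ?_⟩
  intro h hpos hlt
  obtain ⟨⟨h0, h1⟩, ⟨hX₁4, hX₂4⟩, hη100, hΛ1, hJ, hdich⟩ := hgood h hpos hlt
  set η := h/(2*ℓ) with hη_def
  have hηpos : 0 < η := by positivity
  set X₁ := C₁ * h^β₁ with hX₁_def
  set X₂ := C₂ * h^β₂ with hX₂_def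
  set γ₁ : ℂ := ((X₁ : ℝ) : ℂ) / (2*Complex.I) with hγ₁_def
  set γ₂ : ℂ := ((X₂ : ℝ) : ℂ) / (2*Complex.I) with hγ₂_def
  have hrp1 : (0:ℝ) < h^β₁ := Real.rpow_pos_of_pos h0 _
  have hrp2 : (0:ℝ) < h^β₂ := Real.rpow_pos_of_pos h0 _
  have habsγ₁ : ‖γ₁‖ = |C₁| * h^β₁ / 2 := by
    rw [hγ₁_def, norm_div, Complex.norm_real, Real.norm_eq_abs, norm_mul, Complex.norm_I, Complex.norm_two,
      hX₁_def, abs_mul, abs_of_pos hrp1]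
    ring
  have habsγ₂ : ‖γ₂‖ = |C₂| * h^β₂ / 2 := by
    rw [hγ₂_def, norm_div, Complex.norm_real, Real.norm_eq_abs, norm_mul, Complex.norm_I, Complex.norm_two,
      hX₂_def, abs_mul, abs_of_pos hrp2]
    ring
  have hγ₁8 : ‖γ₁‖ ≤ 1/8 := by rw [habsγ₁]; linarith
  have hγ₂8 : ‖γ₂‖ ≤ 1/8 := by rw [habsγ₂]; linarith
  have hγ₁pos : 0 < ‖γ₁‖ := by
    rw [habsγ₁]
    have := abs_pos.mpr hC₁
    positivity
  have hγ₂pos : 0 < ‖γ₂‖ := by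
    rw [habsγ₂]
    have := abs_pos.mpr hC₂
    positivity
  have hγ₁0 : γ₁ ≠ 0 := by
    intro e; rw [e] at hγ₁pos; simp at hγ₁pos
  have hγ₂0 : γ₂ ≠ 0 := by
    intro e; rw [e] at hγ₂pos; simp at hγ₂pos
  set P := ‖(γ₁*γ₂)‖ with hP_def
  have hPval : P = |C₁*C₂|/4 * h^(β₁+β₂) := by
    rw [hP_def, norm_mul, habsγ₁, habsγ₂, Real.rpow_add h0, abs_mul]
    ring
  have hP0 : 0 < P := by rw [hP_def, norm_mul]; positivity
  set Λ := Real.log P with hΛ_def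
  have hΛv : Real.log (|C₁*C₂|/4 * h^(β₁+β₂)) = Λ := by rw [hΛ_def, hPval]
  rw [hΛv] at hΛ1 hJ hdich
  -- identities for Vt and Rc
  have hVt₁ : ∀ z : ℂ, Vt C₁ β₁ h z = γ₁ / z := by
    intro z; rw [Vt, hγ₁_def, div_div, hX₁_def]
  have hVt₂ : ∀ z : ℂ, Vt C₂ β₂ h z = γ₂ / z := by
    intro z; rw [Vt, hγ₂_def, div_div, hX₂_def]
  have hann : ∀ z : ℂ, 1/4 ≤ ‖z‖ → ‖z‖ ≤ 4 →
      z ≠ 0 ∧ z - γ₁ ≠ 0 ∧ z - γ₂ ≠ 0 ∧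
      ‖(Vt C₁ β₁ h z)‖ ≤ 1/2 ∧ ‖(Vt C₂ β₂ h z)‖ ≤ 1/2 := by
    intro z h1' h2'
    have hz0 : z ≠ 0 := by
      intro e; rw [e] at h1'; simp at h1'; linarith
    have habs0 : 0 < ‖z‖ := by
      have := norm_nonneg z; linarith
    have hsub : ∀ γ : ℂ, ‖γ‖ ≤ 1/8 → z - γ ≠ 0 := by
      intro γ hγ e
      have : z = γ := by rwa [sub_eq_zero] at e
      rw [this] at h1'
      linarith
    refine ⟨hz0, hsub γ₁ hγ₁8, hsub γ₂ hγ₂8, ?_, ?_⟩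
    · rw [hVt₁, norm_div, div_le_iff₀ habs0]
      nlinarith
    · rw [hVt₂, norm_div, div_le_iff₀ habs0]
      nlinarith
  have hVtne1 : ∀ z : ℂ, 1/4 ≤ ‖z‖ → ‖z‖ ≤ 4 →
      Vt C₁ β₁ h z ≠ 1 ∧ Vt C₂ β₂ h z ≠ 1 := by
    intro z h1' h2'
    obtain ⟨_, _, _, hv1, hv2⟩ := hann z h1' h2'
    constructor
    · intro e; rw [e] at hv1; simp at hv1; linarith
    · intro e; rw [e] at hv2; simp at hv2; linarith
  have hRc₁ : ∀ z : ℂ, 1/4 ≤ ‖z‖ → ‖z‖ ≤ 4 →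
      Rc C₁ β₁ h z = γ₁ / (z - γ₁) := by
    intro z h1' h2'
    obtain ⟨hz0, hzγ, _, _, _⟩ := hann z h1' h2'
    have hden : 1 - γ₁/z ≠ 0 := by
      rw [sub_ne_zero]
      intro e
      have := hVtne1 z h1' h2'
      rw [hVt₁] at this
      exact this.1 e.symm
    rw [Rc, hVt₁]
    field_simp
  have hRc₂ : ∀ z : ℂ, 1/4 ≤ ‖z‖ → ‖z‖ ≤ 4 →
      Rc C₂ β₂ h z = γ₂ / (z - γ₂) := by
    intro z h1' h2'
    obtain ⟨hz0, _, hzγ, _, _⟩ := hann z h1' h2'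
    have hden : 1 - γ₂/z ≠ 0 := by
      rw [sub_ne_zero]
      intro e
      have := hVtne1 z h1' h2'
      rw [hVt₂] at this
      exact this.2 e.symm
    rw [Rc, hVt₂]
    field_simp
  have hprod : ∀ z : ℂ, 1/4 ≤ ‖z‖ → ‖z‖ ≤ 4 →
      Rc C₁ β₁ h z * Rc C₂ β₂ h z = γ₁ * γ₂ / ((z - γ₁) * (z - γ₂)) := by
    intro z h1' h2'
    rw [hRc₁ z h1' h2', hRc₂ z h1' h2', div_mul_div_comm]
  constructor
  · -- part 1
    intro z h1' h2'
    obtain ⟨hz0, hzγ₁, hzγ₂, _, _⟩ := hann z h1' h2'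
    refine ⟨(hVtne1 z h1' h2').1, (hVtne1 z h1' h2').2, ?_⟩
    rw [hprod z h1' h2']
    exact div_ne_zero (mul_ne_zero hγ₁0 hγ₂0) (mul_ne_zero hzγ₁ hzγ₂)
  · -- part 2
    intro k hk hk1 hk2
    set a := Real.pi * h * (k:ℝ) / ℓ with ha_def
    have ha1 : 1/3 ≤ a := by
      rw [ha_def, le_div_iff₀ hℓ]
      linarith
    have ha2 : a ≤ 3 := by
      rw [ha_def, div_le_iff₀ hℓ]
      linarith
    -- the cut-avoidance hypothesis
    have hcut : ∀ z : ℂ, 1/4 ≤ z.re → z.re ≤ 3.2 → η * (Λ - 4) ≤ z.im → z.im ≤ η * (Λ + 5) →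
        γ₁ * γ₂ / ((z - γ₁) * (z - γ₂)) ∈ Complex.slitPlane := by
      intro z hre1 hre2 him1 him2
      have hγ₁im : γ₁.re = 0 ∧ γ₁.im = -(X₁/2) := by
        have he : γ₁ * (2*Complex.I) = (X₁:ℂ) := by
          rw [hγ₁_def]; field_simp
        have e1 := congrArg Complex.re he
        have e2 := congrArg Complex.im he
        simp [Complex.mul_re, Complex.mul_im] at e1 e2
        constructor <;> linarith
      have hγ₂im : γ₂.re = 0 ∧ γ₂.im = -(X₂/2) := by
        have he : γ₂ * (2*Complex.I) = (X₂:ℂ) := by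
          rw [hγ₂_def]; field_simp
        have e1 := congrArg Complex.re he
        have e2 := congrArg Complex.im he
        simp [Complex.mul_re, Complex.mul_im] at e1 e2
        constructor <;> linarith
      set q : ℂ := (z - γ₁) * (z - γ₂) with hq_def
      have hqre : q.re = z.re * z.re - (z.im + X₁/2) * (z.im + X₂/2) := by
        rw [hq_def, Complex.mul_re, Complex.sub_re, Complex.sub_re, Complex.sub_im,
          Complex.sub_im, hγ₁im.1, hγ₁im.2, hγ₂im.1, hγ₂im.2]
        ring
      have hqim : q.im = 2 * z.re * (z.im + (X₁+X₂)/4) := by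
        rw [hq_def, Complex.mul_im, Complex.sub_re, Complex.sub_re, Complex.sub_im,
          Complex.sub_im, hγ₁im.1, hγ₁im.2, hγ₂im.1, hγ₂im.2]
        ring
      have hPcre : (γ₁*γ₂).re = -(X₁*X₂)/4 := by
        rw [Complex.mul_re, hγ₁im.1, hγ₁im.2, hγ₂im.1, hγ₂im.2]
        ring
      have hPcim : (γ₁*γ₂).im = 0 := by
        rw [Complex.mul_im, hγ₁im.1, hγ₁im.2, hγ₂im.1, hγ₂im.2]
        ring
      have hzim : |z.im| ≤ 1/100 := by
        have e1 : η * (Λ - 4) = -(η * (4 - Λ)) := by ring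
        have e2 : η * (Λ + 5) ≤ η * (4 - Λ) :=
          mul_le_mul_of_nonneg_left (by linarith) hηpos.le
        rw [abs_le]
        constructor <;> linarith
      have hX₁b : |X₁| ≤ 1/4 := by
        rw [hX₁_def, abs_mul, abs_of_pos hrp1]; exact hX₁4
      have hX₂b : |X₂| ≤ 1/4 := by
        rw [hX₂_def, abs_mul, abs_of_pos hrp2]; exact hX₂4
      have habsX₁ : -(1/4:ℝ) ≤ X₁ ∧ X₁ ≤ 1/4 := abs_le.mp hX₁b
      have habsX₂ : -(1/4:ℝ) ≤ X₂ ∧ X₂ ≤ 1/4 := abs_le.mp hX₂b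
      have habsim : -(1/100:ℝ) ≤ z.im ∧ z.im ≤ 1/100 := abs_le.mp hzim
      have hqre_pos : 0 < q.re := by
        rw [hqre]
        have hA : |z.im + X₁/2| ≤ 0.135 := by
          rw [abs_le]; constructor <;> linarith [habsX₁.1, habsX₁.2, habsim.1, habsim.2]
        have hB : |z.im + X₂/2| ≤ 0.135 := by
          rw [abs_le]; constructor <;> linarith [habsX₂.1, habsX₂.2, habsim.1, habsim.2]
        have hAB : (z.im + X₁/2) * (z.im + X₂/2) ≤ 0.135 * 0.135 := by
          calc (z.im + X₁/2) * (z.im + X₂/2) ≤ |(z.im + X₁/2) * (z.im + X₂/2)| := le_abs_self _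
            _ = |z.im + X₁/2| * |z.im + X₂/2| := abs_mul _ _
            _ ≤ 0.135 * 0.135 := by
                apply mul_le_mul hA hB (abs_nonneg _) (by norm_num)
        have hsq : (1/4:ℝ)*(1/4) ≤ z.re * z.re :=
          mul_le_mul hre1 hre1 (by norm_num) (by linarith)
        linarith
      have hqne : q ≠ 0 := by
        intro e; rw [e] at hqre_pos; simp at hqre_pos
      have hnsq : 0 < Complex.normSq q := Complex.normSq_pos.mpr hqne
      rw [Complex.mem_slitPlane_iff]
      rcases lt_trichotomy (C₁*C₂) 0 with hCC | hCC | hCC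
      · left
        have hXX : X₁ * X₂ < 0 := by
          rw [hX₁_def, hX₂_def]
          have : C₁ * h^β₁ * (C₂ * h^β₂) = (C₁*C₂) * (h^β₁ * h^β₂) := by ring
          rw [this]
          exact mul_neg_of_neg_of_pos hCC (mul_pos hrp1 hrp2)
        rw [Complex.div_re, hPcre, hPcim, zero_mul, zero_div, add_zero]
        have h4' : 0 < -(X₁*X₂)/4 := by linarith
        exact div_pos (mul_pos h4' hqre_pos) hnsq
      · exact absurd hCC (mul_ne_zero hC₁ hC₂)
      · right
        have hXX : 0 < X₁ * X₂ := by
          rw [hX₁_def, hX₂_def]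
          have : C₁ * h^β₁ * (C₂ * h^β₂) = (C₁*C₂) * (h^β₁ * h^β₂) := by ring
          rw [this]
          exact mul_pos hCC (mul_pos hrp1 hrp2)
        -- q.im ≠ 0 from the dichotomy
        have hqim_ne : q.im ≠ 0 := by
          rcases hdich hCC with hd | hd
          · have hfac : z.im + (X₁+X₂)/4 < 0 := by
              rw [hX₁_def, hX₂_def]
              linarith
            rw [hqim]
            exact (mul_neg_of_pos_of_neg (by linarith) hfac).ne
          · have hfac : 0 < z.im + (X₁+X₂)/4 := by
              rw [hX₁_def, hX₂_def]
              linarith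
            rw [hqim]
            exact (mul_pos (by linarith) hfac).ne'
        -- conclude (γ₁γ₂/q).im ≠ 0
        intro hwim
        set w : ℂ := γ₁ * γ₂ / q with hw_def
        have hqw : w * q = γ₁ * γ₂ := div_mul_cancel₀ _ hqne
        have eim := congrArg Complex.im hqw
        have ere := congrArg Complex.re hqw
        rw [Complex.mul_im, hwim, hPcim] at eim
        rw [Complex.mul_re, hwim, hPcre] at ere
        simp at eim ere
        -- eim : w.re * q.im = 0 ; ere : w.re * q.re = -(X₁*X₂)/4
        have hwre : w.re ≠ 0 := by
          intro e; rw [e] at ere; simp at ere; linarith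
        rcases eim with e | e
        · exact hwre e
        · exact hqim_ne e
    -- apply core
    have hcore := core a η Λ P γ₁ γ₂ hηpos hη100 ha1 ha2 hγ₁8 hγ₂8 hP_def hP0 hΛ_def hΛ1 hJ hcut
    have hcoef : Complex.I * (h:ℂ) / (2*(ℓ:ℂ)) = Complex.I * ((η : ℝ):ℂ) := by
      rw [hη_def]
      push_cast
      have h2l : (2*(ℓ:ℂ)) ≠ 0 := by
        simp only [ne_eq, mul_eq_zero, not_or]
        constructor
        · norm_num
        · simp [Complex.ofReal_ne_zero]
          exact hℓ.ne'
      field_simp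
    obtain ⟨z₀, ⟨hz₀1, hz₀2, hz₀eq⟩, hz₀u⟩ := hcore
    refine ⟨z₀, ⟨hz₀1, hz₀2, ?_⟩, ?_⟩
    · rw [hprod z₀ hz₀1 hz₀2, hcoef]
      exact hz₀eq
    · rintro y ⟨hy1, hy2, hyeq⟩
      apply hz₀u
      refine ⟨hy1, hy2, ?_⟩
      rw [hprod y hy1 hy2, hcoef] at hyeq
      exact hyeq
end

section
/- Let ℓ₁, ℓ₂ > 0, C₁, C₂, C₃ ∈ ℝ \ {0}, β₁, β₂, β₃ > 0, let h > 0, and let z ∈ ℂ \ {0} with Ṽ_j ≠ 1 for j = 1, 2, 3, where Ṽ_j = C_j h^{β_j}/(2 i z), and set R_j = Ṽ_j/(1 − Ṽ_j), T₂ = 1/(1 − Ṽ₂), and w^a := e^{−i a z/h} for real a. Then the equation w^{2ℓ₁+2ℓ₂} − R₁R₂ w^{2ℓ₂} − R₂R₃ w^{2ℓ₁} − R₁(1+2R₂)R₃ = 0 is equivalent to the statement that the vector (y₁⁻, y₂⁺) = (0,0) is not the only solution of the linear system y₂⁺ = R₁T₂ w^{−2ℓ₁} y₁⁻ + R₂R₃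 w^{−2ℓ₂} y₂⁺, y₁⁻ = R₁R₂ w^{−2ℓ₁} y₁⁻ + T₂R₃ w^{−2ℓ₂} y₂⁺; in particular, this system has a nontrivial solution (y₁⁻, y₂⁺) ∈ ℂ² if and only if w^{2ℓ₁+2ℓ₂} − R₁R₂ w^{2ℓ₂} − R₂R₃ w^{2ℓ₁} − R₁(1+2R₂)R₃ = 0. -/
/-- `T_j = 1 / (1 - Ṽ_j)`. -/
noncomputable def Tc (Cj βj h : ℝ) (z : ℂ) : ℂ := 1 / (1 - Vt Cj βj h z)

/-- `w^a = e^{-i a z / h}` for real `a`, where `w = e^{-iz/h}`. -/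
noncomputable def wpow (h : ℝ) (z : ℂ) (a : ℝ) : ℂ :=
  Complex.exp (-(Complex.I * (a : ℂ) * z) / h)

/-- Reduction of the three-delta resonance condition to a scalar equation: the `2 × 2`
linear system for `(y₁⁻, y₂⁺)` has a nontrivial solution iff
`w^{2ℓ₁+2ℓ₂} - R₁R₂ w^{2ℓ₂} - R₂R₃ w^{2ℓ₁} - R₁(1+2R₂)R₃ = 0`. -/
theorem three_delta_system_nontrivial_iff
    (ℓ₁ ℓ₂ C₁ C₂ C₃ β₁ β₂ β₃ h : ℝ)
    (hℓ₁ : 0 < ℓ₁) (hℓ₂ : 0 < ℓ₂)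
    (hC₁ : C₁ ≠ 0) (hC₂ : C₂ ≠ 0) (hC₃ : C₃ ≠ 0)
    (hβ₁ : 0 < β₁) (hβ₂ : 0 < β₂) (hβ₃ : 0 < β₃) (hh : 0 < h)
    (z : ℂ) (hz : z ≠ 0)
    (hVt1 : Vt C₁ β₁ h z ≠ 1) (hVt2 : Vt C₂ β₂ h z ≠ 1) (hVt3 : Vt C₃ β₃ h z ≠ 1) :
    (wpow h z (2 * ℓ₁ + 2 * ℓ₂)
        - Rc C₁ β₁ h z * Rc C₂ β₂ h z * wpow h z (2 * ℓ₂)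
        - Rc C₂ β₂ h z * Rc C₃ β₃ h z * wpow h z (2 * ℓ₁)
        - Rc C₁ β₁ h z * (1 + 2 * Rc C₂ β₂ h z) * Rc C₃ β₃ h z = 0)
    ↔
    ∃ y₁ y₂ : ℂ, ¬(y₁ = 0 ∧ y₂ = 0) ∧
      y₂ = Rc C₁ β₁ h z * Tc C₂ β₂ h z * wpow h z (-(2 * ℓ₁)) * y₁
          + Rc C₂ β₂ h z * Rc C₃ β₃ h z * wpow h z (-(2 * ℓ₂)) * y₂ ∧
      y₁ = Rc C₁ β₁ h z * Rc C₂ β₂ h z * wpow h z (-(2 * ℓ₁)) * y₁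
          + Tc C₂ β₂ h z * Rc C₃ β₃ h z * wpow h z (-(2 * ℓ₂)) * y₂ := by
  set R1 := Rc C₁ β₁ h z with hR1def
  set R2 := Rc C₂ β₂ h z with hR2def
  set R3 := Rc C₃ β₃ h z with hR3def
  set T2 := Tc C₂ β₂ h z with hT2def
  set W1 := wpow h z (2 * ℓ₁) with hW1def
  set W2 := wpow h z (2 * ℓ₂) with hW2def
  have hW1ne : W1 ≠ 0 := Complex.exp_ne_zero _
  have hW2ne : W2 ≠ 0 := Complex.exp_ne_zero _
  have hVne : ∀ (C β : ℝ), C ≠ 0 → Vt C β h z ≠ 0 := by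
    intro C β hC
    unfold Vt
    apply div_ne_zero
    · exact_mod_cast mul_ne_zero hC (ne_of_gt (Real.rpow_pos_of_pos hh β))
    · exact mul_ne_zero (mul_ne_zero two_ne_zero Complex.I_ne_zero) hz
  have h1V : ∀ (C β : ℝ), Vt C β h z ≠ 1 → (1 : ℂ) - Vt C β h z ≠ 0 :=
    fun C β hV => sub_ne_zero.mpr (Ne.symm hV)
  have hR1ne : R1 ≠ 0 := div_ne_zero (hVne _ _ hC₁) (h1V _ _ hVt1)
  have hR3ne : R3 ≠ 0 := div_ne_zero (hVne _ _ hC₃) (h1V _ _ hVt3)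
  have hT2ne : T2 ≠ 0 := by
    rw [hT2def]; unfold Tc; exact div_ne_zero one_ne_zero (h1V _ _ hVt2)
  have hT2eq : T2 = 1 + R2 := by
    have hne2 := h1V _ _ hVt2
    rw [hT2def, hR2def]; unfold Tc Rc
    field_simp
    ring
  have hWadd : wpow h z (2 * ℓ₁ + 2 * ℓ₂) = W1 * W2 := by
    rw [hW1def, hW2def]; unfold wpow
    rw [← Complex.exp_add]; congr 1; push_cast; ring
  have hWn1 : wpow h z (-(2 * ℓ₁)) = W1⁻¹ := by
    rw [hW1def]; unfold wpow
    rw [← Complex.exp_neg]; congr 1; push_cast; ring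
  have hWn2 : wpow h z (-(2 * ℓ₂)) = W2⁻¹ := by
    rw [hW2def]; unfold wpow
    rw [← Complex.exp_neg]; congr 1; push_cast; ring
  rw [hWadd, hWn1, hWn2]
  have hS : W1 * W2 - R1 * R2 * W2 - R2 * R3 * W1 - R1 * (1 + 2 * R2) * R3
      = W1 * W2 * ((1 - R1 * R2 * W1⁻¹) * (1 - R2 * R3 * W2⁻¹)
        - (R1 * T2 * W1⁻¹) * (T2 * R3 * W2⁻¹)) := by
    rw [hT2eq]; field_simp; ring
  rw [hS]
  constructor
  · intro hzero
    have hD : (1 - R1 * R2 * W1⁻¹) * (1 - R2 * R3 * W2⁻¹)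
        - (R1 * T2 * W1⁻¹) * (T2 * R3 * W2⁻¹) = 0 := by
      rcases mul_eq_zero.mp hzero with hW | hD
      · exact absurd hW (mul_ne_zero hW1ne hW2ne)
      · exact hD
    refine ⟨1 - R2 * R3 * W2⁻¹, R1 * T2 * W1⁻¹, ?_, by ring, by linear_combination hD⟩
    rintro ⟨-, hy2⟩
    exact mul_ne_zero (mul_ne_zero hR1ne hT2ne) (inv_ne_zero hW1ne) hy2
  · rintro ⟨y₁, y₂, hnt, h1, h2⟩
    have e1 : (1 - R2 * R3 * W2⁻¹) * y₂ = (R1 * T2 * W1⁻¹) * y₁ := by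
      linear_combination h1
    have e2 : (1 - R1 * R2 * W1⁻¹) * y₁ = (T2 * R3 * W2⁻¹) * y₂ := by
      linear_combination h2
    by_contra hne
    have hD : (1 - R1 * R2 * W1⁻¹) * (1 - R2 * R3 * W2⁻¹)
        - (R1 * T2 * W1⁻¹) * (T2 * R3 * W2⁻¹) ≠ 0 := by
      intro hD0
      exact hne (by rw [hD0, mul_zero])
    have hy1 : y₁ = 0 := by
      have : ((1 - R1 * R2 * W1⁻¹) * (1 - R2 * R3 * W2⁻¹)
          - (R1 * T2 * W1⁻¹) * (T2 * R3 * W2⁻¹)) * y₁ = 0 := by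
        linear_combination (1 - R2 * R3 * W2⁻¹) * e2 + (T2 * R3 * W2⁻¹) * e1
      exact (mul_eq_zero.mp this).resolve_left hD
    have hy2 : y₂ = 0 := by
      have : ((1 - R1 * R2 * W1⁻¹) * (1 - R2 * R3 * W2⁻¹)
          - (R1 * T2 * W1⁻¹) * (T2 * R3 * W2⁻¹)) * y₂ = 0 := by
        linear_combination (1 - R1 * R2 * W1⁻¹) * e1 + (R1 * T2 * W1⁻¹) * e2
      exact (mul_eq_zero.mp this).resolve_left hD
    exact hnt ⟨hy1, hy2⟩
end
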